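/- Under Assumption 2 with constant δ > 0, for every prior μ ∈ Δ(Ω), every sequential persuasion starting from μ, and every n ≥ 1, the probability that the persuasion takes more than n nontrivial experiments (i.e., the total probability of histories containing more than n experiments not in T) is at most log|Ω| / (n·δ). -/

import Mathlib

open Filter Topology
open scoped Classical

noncomputable section

/-- Δ(Ω): beliefs, i.e. probability distributions on the finite state space Ω,
as a subspace of Ω → ℝ (its topology agrees with the total-variation one). -/
abbrev Belief (Ω : Type*) [Fintype Ω] :=
  {p : Ω → ℝ // (∀ ω, 0 ≤ p ω) ∧ ∑ ω, p ω = 1}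

variable {Ω : Type*} [Fintype Ω]

/-- An element of F₀: a finite-support experiment, i.e. a finitely supported probability
distribution over beliefs (keys are the distinct posteriors p_j, values the positive
weights λ_j). -/
structure SPExp (Ω : Type*) [Fintype Ω] where
  w : Belief Ω →₀ ℝ
  nonneg : ∀ p, 0 ≤ w p
  sum_one : ∑ p ∈ w.support, w p = 1

namespace SPExp

/-- τ(e): the support of an experiment. -/
def tau (e : SPExp Ω) : Finset (Belief Ω) := e.w.support

/-- Expectation of a real-valued function under an experiment. -/
def expect (e : SPExp Ω) (f : Belief Ω → ℝ) : ℝ := ∑ p ∈ e.w.support, e.w p * f p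

/-- σ(e): the barycenter (expectation) of an experiment. -/
def sigma (e : SPExp Ω) : Belief Ω :=
  ⟨fun ω => ∑ p ∈ e.w.support, e.w p * p.val ω,
   fun ω => Finset.sum_nonneg fun p _ => mul_nonneg (e.nonneg p) (p.2.1 ω),
   by
     calc ∑ ω, ∑ p ∈ e.w.support, e.w p * p.val ω
         = ∑ p ∈ e.w.support, ∑ ω, e.w p * p.val ω := Finset.sum_comm
       _ = ∑ p ∈ e.w.support, e.w p * ∑ ω, p.val ω := by
           refine Finset.sum_congr rfl fun p _ => ?_
           rw [Finset.mul_sum]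
       _ = ∑ p ∈ e.w.support, e.w p := by
           refine Finset.sum_congr rfl fun p _ => ?_
           rw [p.2.2, mul_one]
       _ = 1 := e.sum_one⟩

/-- The trivial experiment (1, p). -/
def triv (p : Belief Ω) : SPExp Ω where
  w := Finsupp.single p 1
  nonneg := fun q => by
    rw [Finsupp.single_apply]
    split <;> norm_num
  sum_one := by
    rw [Finsupp.support_single_ne_zero _ one_ne_zero]
    simp

end SPExp

/-- T: the set of trivial experiments. -/
def Trivials (Ω : Type*) [Fintype Ω] : Set (SPExp Ω) := Set.range SPExp.triv

/-- Weak convergence of experiments, viewed as Borel probability measures on Δ(Ω). -/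
def WeakTendsto (es : ℕ → SPExp Ω) (e : SPExp Ω) : Prop :=
  ∀ f : Belief Ω → ℝ, Continuous f →
    Tendsto (fun i => (es i).expect f) atTop (𝓝 (e.expect f))

/-- Convergence of beliefs in total variation. -/
def TVTendsto (ps : ℕ → Belief Ω) (p : Belief Ω) : Prop :=
  Tendsto (fun i => ∑ ω, |(ps i).val ω - p.val ω|) atTop (𝓝 0)

/-- Histories, most recent step first: entries are (experiment taken, realized posterior);
the starting belief is kept separately. -/
abbrev Hist (Ω : Type*) [Fintype Ω] := List (SPExp Ω × Belief Ω)

/-- last(ξ): the current belief after history ξ started at μ. -/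
def lastBelief (μ : Belief Ω) : Hist Ω → Belief Ω
  | [] => μ
  | (_, p) :: _ => p

/-- Pr[ξ]: the probability of a history. -/
def histProb : Hist Ω → ℝ
  | [] => 1
  | (e, p) :: ξ => e.w p * histProb ξ

/-- A sequential persuasion starting from μ with feasible experiments F, given by its
history-dependent choice of the next (feasible, Bayes-plausible) experiment.  An n-step
sequential persuasion is such a strategy used for n steps; an infinite sequential
persuasion is the strategy itself. -/
structure SeqP {Ω : Type*} [Fintype Ω] (F : Set (SPExp Ω)) (μ : Belief Ω) where
  next : Hist Ω → SPExp Ω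
  feasible : ∀ ξ, next ξ ∈ F
  bayes : ∀ ξ, (next ξ).sigma = lastBelief μ ξ

variable {F : Set (SPExp Ω)} {μ : Belief Ω}

/-- Expectation of g over the n-step histories of S extending ξ. -/
def histExp (S : SeqP F μ) (g : Hist Ω → ℝ) : ℕ → Hist Ω → ℝ
  | 0, ξ => g ξ
  | n + 1, ξ => (S.next ξ).expect fun p => histExp S g n ((S.next ξ, p) :: ξ)

/-- Ξ_n: the set of n-step histories of S. -/
def Hists (S : SeqP F μ) : ℕ → Set (Hist Ω)
  | 0 => {[]}
  | n + 1 => {ξ' | ∃ ξ ∈ Hists S n, ∃ p ∈ (S.next ξ).tau, ξ' = (S.next ξ, p) :: ξ}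

/-- ξ padded by l trivial steps. -/
def padHist (μ : Belief Ω) (ξ : Hist Ω) (l : ℕ) : Hist Ω :=
  List.replicate l (SPExp.triv (lastBelief μ ξ), lastBelief μ ξ) ++ ξ

/-- S terminates after ξ: all subsequent choices (along trivial continuations of ξ)
are the trivial experiment. -/
def TerminatesAfter (S : SeqP F μ) (ξ : Hist Ω) : Prop :=
  ∀ l : ℕ, S.next (padHist μ ξ l) = SPExp.triv (lastBelief μ ξ)

/-- 𝒱(S⁽ⁿ⁾) = E[v(b_n)], the expected utility of the n-step persuasion given by the
first n steps of S. -/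
def stepUtility (v : Belief Ω → ℝ) (S : SeqP F μ) (n : ℕ) : ℝ :=
  histExp S (fun ξ => v (lastBelief μ ξ)) n []

/-- Pr[S terminates after n steps]. -/
def termProb (S : SeqP F μ) (n : ℕ) : ℝ :=
  histExp S (fun ξ => if TerminatesAfter S ξ then 1 else 0) n []

/-- 𝒱(S) for an infinite sequential persuasion S. -/
def infUtility (v : Belief Ω → ℝ) (S : SeqP F μ) : ℝ :=
  ⨆ n : ℕ, histExp S (fun ξ => if TerminatesAfter S ξ then v (lastBelief μ ξ) else 0) n []

/-- Pr[b_n ∈ O] for the belief b_n induced by S after n steps. -/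
def massIn (S : SeqP F μ) (O : Set (Belief Ω)) (n : ℕ) : ℝ :=
  histExp S (fun ξ => if lastBelief μ ξ ∈ O then 1 else 0) n []

/-- v_n(p): the optimal value over n-step sequential persuasions starting from p. -/
def vN (F : Set (SPExp Ω)) (v : Belief Ω → ℝ) (n : ℕ) (p : Belief Ω) : ℝ :=
  ⨆ S : SeqP F p, stepUtility v S n

/-- v_∞(p): the optimal value over infinite sequential persuasions starting from p. -/
def vInf (F : Set (SPExp Ω)) (v : Belief Ω → ℝ) (p : Belief Ω) : ℝ :=
  ⨆ S : SeqP F p, infUtility v S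

/-- Assumption 1: a uniform support bound h, and weak closedness of F. -/
def Assumption1 (F : Set (SPExp Ω)) (h : ℕ) : Prop :=
  (∀ e ∈ F, e.tau.card ≤ h) ∧
  ∀ es : ℕ → SPExp Ω, (∀ i, es i ∈ F) → ∀ e : SPExp Ω, WeakTendsto es e → e ∈ F

/-- Shannon entropy of a belief. -/
def entropy (p : Belief Ω) : ℝ := -∑ ω, p.val ω * Real.log (p.val ω)

/-- Assumption 2: every nontrivial feasible experiment lowers expected entropy by δ. -/
def Assumption2 (F : Set (SPExp Ω)) (δ : ℝ) : Prop :=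
  ∀ e ∈ F \ Trivials Ω, e.expect entropy ≤ entropy e.sigma - δ

/-- S is (effectively) an n-step sequential persuasion: after n steps it only takes
trivial experiments. -/
def IsNStep (S : SeqP F μ) (n : ℕ) : Prop :=
  ∀ ξ : Hist Ω, n ≤ ξ.length → S.next ξ = SPExp.triv (lastBelief μ ξ)

/-- Assumption 3 at prior μ: a sequence of finite-step sequential persuasions whose
values tend to v_∞(μ) and which terminate at a uniform rate. -/
def Assumption3 (F : Set (SPExp Ω)) (v : Belief Ω → ℝ) (μ : Belief Ω) : Prop :=
  ∃ (nk : ℕ → ℕ) (Sk : ℕ → SeqP F μ),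
    (∀ k, IsNStep (Sk k) (nk k)) ∧
    Tendsto (fun k => stepUtility v (Sk k) (nk k)) atTop (𝓝 (vInf F v μ)) ∧
    ∀ ε : ℝ, 0 < ε → ∃ N : ℕ, ∀ k, N ≤ nk k → 1 - ε ≤ termProb (Sk k) N

/-- v̂: the concave closure of v (the value of unconstrained Bayesian persuasion). -/
def concaveClosure (v : Belief Ω → ℝ) (p : Belief Ω) : ℝ :=
  sSup {x : ℝ | ∃ e : SPExp Ω, e.sigma = p ∧ x = e.expect v}

/-- O is implementable for (μ, F). -/
def Implementable (F : Set (SPExp Ω)) (μ : Belief Ω) (O : Set (Belief Ω)) : Prop :=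
  ∀ ε : ℝ, 0 < ε → ∃ (n : ℕ) (S : SeqP F μ), 1 - ε < massIn S O n

/-- S is a Markov sequential persuasion compatible with (μ, D, Z, ρ). -/
def MarkovCompatible (S : SeqP F μ) (D Z : Set (Belief Ω)) (ρ : Belief Ω → SPExp Ω) : Prop :=
  ∀ ξ : Hist Ω,
    (lastBelief μ ξ ∈ D → S.next ξ = ρ (lastBelief μ ξ)) ∧
    (lastBelief μ ξ ∈ Z → S.next ξ = SPExp.triv (lastBelief μ ξ))

/-- The j-th child of vertex m at depth n of the infinite h-ary tree. -/
def treeChild {h n : ℕ} (m : Fin (h ^ n)) (j : Fin h) : Fin (h ^ (n + 1)) :=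
  ⟨m.val * h + j.val, by
    have h1 : m.val + 1 ≤ h ^ n := m.isLt
    have h2 : j.val < h := j.isLt
    calc m.val * h + j.val < m.val * h + h := by omega
      _ = (m.val + 1) * h := by ring
      _ ≤ h ^ n * h := Nat.mul_le_mul h1 le_rfl
      _ = h ^ (n + 1) := (pow_succ h n).symm⟩

/-- An h-branching sequential persuasion starting from μ. -/
structure HBranch (Ω : Type*) [Fintype Ω] (F : Set (SPExp Ω)) (h : ℕ) (μ : Belief Ω) where
  π : ∀ n : ℕ, Fin (h ^ n) → ℝ
  β : ∀ n : ℕ, Fin (h ^ n) → Belief Ω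
  η : ∀ n : ℕ, Fin (h ^ n) → SPExp Ω
  π_nonneg : ∀ n m, 0 ≤ π n m
  π_sum : ∀ n : ℕ, ∑ m, π n m = 1
  η_mem : ∀ n m, η n m ∈ F
  β_root : ∀ m, β 0 m = μ
  compat_sigma : ∀ n m, (η n m).sigma = β n m
  compat_tau : ∀ (n : ℕ) (m : Fin (h ^ n)), ∀ p ∈ (η n m).tau,
    ∃ j : Fin h, β (n + 1) (treeChild m j) = p
  consistent : ∀ (n : ℕ) (m : Fin (h ^ n)) (p : Belief Ω),
    (∑ j : Fin h, if β (n + 1) (treeChild m j) = p then π (n + 1) (treeChild m j) else 0)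
      = π n m * (η n m).w p

/-- c' (at depth n + l) is a descendant of c (at depth n) in the h-ary tree. -/
def Descendant {h : ℕ} : {n : ℕ} → (l : ℕ) → Fin (h ^ n) → Fin (h ^ (n + l)) → Prop
  | _, 0, c, c' => c = c'
  | _, l + 1, c, c' => ∃ c'' j, Descendant l c c'' ∧ c' = treeChild c'' j

namespace HBranch

variable {h : ℕ}

/-- B terminates after vertex m at depth n. -/
def TermAfter (B : HBranch Ω F h μ) (n : ℕ) (m : Fin (h ^ n)) : Prop :=
  B.η n m ∈ Trivials Ω ∧
  ∀ (l : ℕ) (c' : Fin (h ^ (n + l))), Descendant l m c' → 0 < B.π (n + l) c' →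
    B.η (n + l) c' ∈ Trivials Ω

/-- Pr[B terminates after n steps]. -/
def termProb (B : HBranch Ω F h μ) (n : ℕ) : ℝ :=
  ∑ m : Fin (h ^ n), if B.TermAfter n m then B.π n m else 0

end HBranch

/-- B represents the infinite sequential persuasion S (via maps r_n : C_n → Ξ_n). -/
def Represents (S : SeqP F μ) {h : ℕ} (B : HBranch Ω F h μ) : Prop :=
  ∃ r : ∀ n : ℕ, Fin (h ^ n) → Hist Ω,
    ∀ n : ℕ,
      (∀ c, r n c ∈ Hists S n) ∧
      (∀ ξ ∈ Hists S n, histProb ξ = ∑ c, if r n c = ξ then B.π n c else 0) ∧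
      (∀ c, lastBelief μ (r n c) = B.β n c ∧ S.next (r n c) = B.η n c) ∧
      (∀ l : ℕ, ∀ ξ ∈ Hists S n, ∀ ξ' ∈ Hists S (n + l),
        (ξ <:+ ξ' ↔
          ∀ c' : Fin (h ^ (n + l)), r (n + l) c' = ξ' →
            ∃ c : Fin (h ^ n), r n c = ξ ∧ Descendant l c c'))

/-- The number of nontrivial experiments taken along a history. -/
def nontrivCount (ξ : Hist Ω) : ℕ :=
  ξ.countP fun s => decide (s.1 ∉ Trivials Ω)

end

/-!
Proof idea: along any history, entropy of the current belief plus δ times the number of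
nontrivial experiments taken so far is a supermartingale, since a trivial experiment changes
neither term and by Assumption 2 a nontrivial one lowers expected entropy by at least δ. Its
expectation therefore never exceeds H(μ) ≤ log|Ω|, so δ·E[#nontrivial] ≤ log|Ω|, and Markov's
inequality bounds the probability of more than n nontrivial experiments by log|Ω|/(nδ).
-/

open Finset Real

lemma Real.sum_negMulLog_le_log_card {ι : Type*} {s : Finset ι} {p : ι → ℝ}
    (hp₀ : ∀ i ∈ s, 0 ≤ p i) (hp₁ : ∑ i ∈ s, p i = 1) :
    ∑ i ∈ s, negMulLog (p i) ≤ log #s := by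
  have hs : s.Nonempty := nonempty_of_sum_ne_zero (hp₁ ▸ one_ne_zero)
  have hc : (0 : ℝ) < #s := by exact_mod_cast hs.card_pos
  have jensen := concaveOn_negMulLog.le_map_sum (t := s) (w := fun _ => (#s : ℝ)⁻¹) (p := p)
    (fun _ _ => by positivity) (by simp [hc.ne']) fun i hi => Set.mem_Ici.mpr (hp₀ i hi)
  simp only [smul_eq_mul, ← mul_sum, hp₁, mul_one] at jensen
  rw [negMulLog, log_inv] at jensen
  have := mul_le_mul_of_nonneg_left jensen hc.le
  field_simp at this
  linarith

section

variable {Ω : Type*} [Fintype Ω]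

namespace SPExp

lemma expect_mono (e : SPExp Ω) {f g : Belief Ω → ℝ} (h : ∀ p, f p ≤ g p) :
    e.expect f ≤ e.expect g :=
  sum_le_sum fun p _ => mul_le_mul_of_nonneg_left (h p) (e.nonneg p)

lemma expect_const_mul (e : SPExp Ω) (c : ℝ) (f : Belief Ω → ℝ) :
    e.expect (fun p => c * f p) = c * e.expect f := by
  rw [expect, expect, mul_sum]
  exact sum_congr rfl fun p _ => by ring

lemma expect_add_const (e : SPExp Ω) (f : Belief Ω → ℝ) (c : ℝ) :
    e.expect (fun p => f p + c) = e.expect f + c := by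
  simp only [expect, mul_add, sum_add_distrib, ← sum_mul, e.sum_one, one_mul]

lemma expect_triv (p : Belief Ω) (f : Belief Ω → ℝ) : (triv p).expect f = f p := by
  simp [expect, triv]

lemma sigma_triv (p : Belief Ω) : (triv p).sigma = p := by
  ext ω
  simp [sigma, triv]

end SPExp

open SPExp

lemma entropy_eq_sum_negMulLog (p : Belief Ω) : entropy p = ∑ ω, negMulLog (p.val ω) := by
  simp [entropy, negMulLog]

lemma entropy_nonneg (p : Belief Ω) : 0 ≤ entropy p := by
  rw [entropy_eq_sum_negMulLog]
  refine sum_nonneg fun ω _ => negMulLog_nonneg (p.2.1 ω) ?_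
  calc p.val ω ≤ ∑ ω', p.val ω' := single_le_sum (fun ω' _ => p.2.1 ω') (mem_univ ω)
    _ = 1 := p.2.2

lemma entropy_le_log_card (p : Belief Ω) : entropy p ≤ log (Fintype.card Ω) := by
  rw [entropy_eq_sum_negMulLog]
  exact sum_negMulLog_le_log_card (fun ω _ => p.2.1 ω) p.2.2

lemma nontrivCount_cons (e : SPExp Ω) (p : Belief Ω) (ξ : Hist Ω) :
    nontrivCount ((e, p) :: ξ) = nontrivCount ξ + if e ∈ Trivials Ω then 0 else 1 := by
  by_cases he : e ∈ Trivials Ω <;> simp [nontrivCount, he]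

variable {F : Set (SPExp Ω)} {μ : Belief Ω}

lemma histExp_mono (S : SeqP F μ) {g g' : Hist Ω → ℝ} (h : ∀ ξ, g ξ ≤ g' ξ) :
    ∀ N ξ, histExp S g N ξ ≤ histExp S g' N ξ
  | 0, ξ => h ξ
  | N + 1, _ => expect_mono _ fun _ => histExp_mono S h N _

lemma histExp_const_mul (S : SeqP F μ) (c : ℝ) (g : Hist Ω → ℝ) :
    ∀ N ξ, histExp S (fun ξ' => c * g ξ') N ξ = c * histExp S g N ξ
  | 0, _ => rfl
  | N + 1, ξ => by
    simp only [histExp, histExp_const_mul S c g N, expect_const_mul]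

lemma histExp_le_of_supermartingale (S : SeqP F μ) {g : Hist Ω → ℝ}
    (hg : ∀ ξ, (S.next ξ).expect (fun p => g ((S.next ξ, p) :: ξ)) ≤ g ξ) :
    ∀ N ξ, histExp S g N ξ ≤ g ξ
  | 0, _ => le_rfl
  | N + 1, ξ => (expect_mono _ fun _ => histExp_le_of_supermartingale S hg N _).trans (hg ξ)

lemma expect_entropy_add_nontrivCount_le {δ : ℝ} (hA2 : Assumption2 F δ) (S : SeqP F μ)
    (ξ : Hist Ω) :
    (S.next ξ).expect (fun p => entropy p + δ * nontrivCount ((S.next ξ, p) :: ξ))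
      ≤ entropy (lastBelief μ ξ) + δ * nontrivCount ξ := by
  by_cases htriv : S.next ξ ∈ Trivials Ω
  · obtain ⟨q, hq⟩ := htriv
    have hq_last : q = lastBelief μ ξ := by simpa [← hq, sigma_triv] using S.bayes ξ
    rw [← hq, expect_triv, nontrivCount_cons, hq_last]
    simp [show triv (lastBelief μ ξ) ∈ Trivials Ω from ⟨_, rfl⟩]
  · simp only [nontrivCount_cons, htriv, if_false, Nat.cast_add, Nat.cast_one]
    have hdrop := hA2 _ ⟨S.feasible ξ, htriv⟩
    rw [S.bayes ξ] at hdrop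
    rw [expect_add_const]
    linarith

end

theorem nontrivial_steps_bound_general {Ω : Type*} [Fintype Ω]
    (F : Set (SPExp Ω))
    (δ : ℝ) (hδ : 0 < δ) (hA2 : Assumption2 F δ)
    (μ : Belief Ω) (S : SeqP F μ) (n : ℕ) (hn : 1 ≤ n) (N : ℕ) :
    histExp S (fun ξ => if n < nontrivCount ξ then (1 : ℝ) else 0) N []
      ≤ Real.log (Fintype.card Ω) / (n * δ) := by
  have hnδ : 0 < (n : ℝ) * δ := mul_pos (by exact_mod_cast hn) hδ
  set Φ : Hist Ω → ℝ := fun ξ => entropy (lastBelief μ ξ) + δ * nontrivCount ξ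
  have markov : ∀ ξ, (if n < nontrivCount ξ then (1 : ℝ) else 0) ≤ (n * δ)⁻¹ * Φ ξ := by
    intro ξ
    rw [le_inv_mul_iff₀ hnδ]
    have hH := entropy_nonneg (lastBelief μ ξ)
    split_ifs with h
    · have : (n : ℝ) ≤ nontrivCount ξ := by exact_mod_cast h.le
      nlinarith
    · rw [mul_zero]
      exact add_nonneg hH (by positivity)
  calc histExp S (fun ξ => if n < nontrivCount ξ then (1 : ℝ) else 0) N []
      ≤ histExp S (fun ξ => (n * δ)⁻¹ * Φ ξ) N [] := histExp_mono S markov N []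
    _ = (n * δ)⁻¹ * histExp S Φ N [] := histExp_const_mul S _ Φ N []
    _ ≤ (n * δ)⁻¹ * entropy μ := by
      gcongr
      simpa [Φ, nontrivCount, lastBelief] using
        histExp_le_of_supermartingale (g := Φ) S (expect_entropy_add_nontrivCount_le hA2 S) N []
    _ ≤ log (Fintype.card Ω) / (n * δ) := by
      rw [div_eq_inv_mul]
      gcongr
      exact entropy_le_log_card μ

/-- Under Assumption 2, any sequential persuasion takes more than n nontrivial
experiments with probability at most log|Ω|/(nδ) (at any horizon N). -/
theorem nontrivial_steps_bound {Ω : Type*} [Fintype Ω] [Nonempty Ω]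
    (F : Set (SPExp Ω)) (hTF : Trivials Ω ⊆ F)
    (δ : ℝ) (hδ : 0 < δ) (hA2 : Assumption2 F δ)
    (μ : Belief Ω) (S : SeqP F μ) (n : ℕ) (hn : 1 ≤ n) (N : ℕ) :
    histExp S (fun ξ => if n < nontrivCount ξ then (1 : ℝ) else 0) N []
      ≤ Real.log (Fintype.card Ω) / (n * δ) :=
  nontrivial_steps_bound_general F δ hδ hA2 μ S n hn N
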